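/- arXiv:1206.1496 — 2 statements merged into one kernel-verified Lean document; each statement's English description precedes it below -/
import Mathlib

section
/- Ball–floor collision formulas: with G = diag(m,m,m,J,J,J), B = [[1,0,0,0,−r,0],[0,1,0,r,0,0],[0,0,1,0,0,0]] and P = G⁻¹Bᵀ(BG⁻¹Bᵀ)⁻¹B, the reflection v⁺ = (I−2P)v⁻ is given componentwise by: v₁⁺ = ((mr²−J)/J′)v₁⁻ + (2Jr/J′)ω₂⁻, v₂⁺ = ((mr²−J)/J′)v₂⁻ − (2Jr/J′)ω₁⁻, v₃⁺ = −v₃⁻, ω₁⁺ = −(2rm/J′)v₂⁻ + ((J−mr²)/J′)ω₁⁻, ω₂⁺ = (2rm/J′)v₁⁻ + ((J−mr²)/J′)ω₂⁻, ω₃⁺ = ω₃⁻, where J′ = J + r²m. -/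
open Matrix

/-! `G⁻¹` is diagonal, and so is `B G⁻¹ Bᵀ = diag(1/m + r²/J, 1/m + r²/J, 1/m)`. Hence
`P v = G⁻¹ Bᵀ (B G⁻¹ Bᵀ)⁻¹ (B v)` has a closed form in terms of the velocity of the contact
point `B v = (v₁ - r ω₂, v₂ + r ω₁, v₃)`, and `v⁺ = v - 2 P v` is read off componentwise. -/

theorem Matrix.inv_diagonal_of_ne_zero {n K : Type*} [Fintype n] [DecidableEq n] [Field K]
    {d : n → K} (hd : ∀ i, d i ≠ 0) : (diagonal d)⁻¹ = diagonal d⁻¹ :=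
  inv_eq_right_inv <| by
    rw [diagonal_mul_diagonal, ← diagonal_one]
    exact congrArg diagonal (funext fun i => mul_inv_cancel₀ (hd i))

noncomputable def collisionProjection {n k R : Type*} [Fintype n] [Fintype k] [DecidableEq n]
    [DecidableEq k] [CommRing R] (G : Matrix n n R) (B : Matrix k n R) : Matrix n n R :=
  G⁻¹ * Bᵀ * (B * G⁻¹ * Bᵀ)⁻¹ * B

def ballMetric (m J : ℝ) : Matrix (Fin 6) (Fin 6) ℝ := diagonal ![m, m, m, J, J, J]

def noSlipConstraint (r : ℝ) : Matrix (Fin 3) (Fin 6) ℝ :=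
  !![1, 0, 0, 0, -r, 0; 0, 1, 0, r, 0, 0; 0, 0, 1, 0, 0, 0]

lemma noSlipConstraint_mulVec (r : ℝ) (v : Fin 6 → ℝ) :
    noSlipConstraint r *ᵥ v = ![v 0 - r * v 4, v 1 + r * v 3, v 2] := by
  ext i
  fin_cases i <;> simp [noSlipConstraint, mulVec, dotProduct, Fin.sum_univ_six, sub_eq_add_neg]

lemma noSlipConstraint_transpose_mulVec (r : ℝ) (μ : Fin 3 → ℝ) :
    (noSlipConstraint r)ᵀ *ᵥ μ = ![μ 0, μ 1, μ 2, r * μ 1, -(r * μ 0), 0] := by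
  ext i
  fin_cases i <;> simp [noSlipConstraint, mulVec, dotProduct, Fin.sum_univ_three]

lemma noSlipConstraint_mul_diagonal_mul_transpose (r a b : ℝ) :
    noSlipConstraint r * diagonal ![a, a, a, b, b, b] * (noSlipConstraint r)ᵀ =
      diagonal ![a + r ^ 2 * b, a + r ^ 2 * b, a] := by
  ext i j
  fin_cases i <;> fin_cases j <;>
    simp [noSlipConstraint, mul_apply, Fin.sum_univ_six, vecMul_diagonal] <;> ring

lemma inv_ballMetric {m J : ℝ} (hm : m ≠ 0) (hJ : J ≠ 0) :
    (ballMetric m J)⁻¹ = diagonal ![m⁻¹, m⁻¹, m⁻¹, J⁻¹, J⁻¹, J⁻¹] := by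
  rw [ballMetric, inv_diagonal_of_ne_zero (by simp [Fin.forall_fin_succ, hm, hJ])]
  congr 1
  ext i
  fin_cases i <;> rfl

section
variable {m J : ℝ} (hm : 0 < m) (hJ : 0 < J) (r : ℝ)
include hm hJ

lemma noSlipConstraint_gram_inv :
    (noSlipConstraint r * (ballMetric m J)⁻¹ * (noSlipConstraint r)ᵀ)⁻¹ =
      diagonal ![m * J / (J + r ^ 2 * m), m * J / (J + r ^ 2 * m), m] := by
  have hJ' : 0 < J + r ^ 2 * m := by positivity
  have hsum : m⁻¹ + r ^ 2 * J⁻¹ = (J + r ^ 2 * m) / (m * J) := by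
    field_simp
  rw [inv_ballMetric hm.ne' hJ.ne', noSlipConstraint_mul_diagonal_mul_transpose, hsum,
    inv_diagonal_of_ne_zero (by simp [Fin.forall_fin_succ, hm.ne', hJ.ne', hJ'.ne'])]
  congr 1
  ext i
  fin_cases i <;> simp

lemma collisionProjection_mulVec (v : Fin 6 → ℝ) :
    collisionProjection (ballMetric m J) (noSlipConstraint r) *ᵥ v =
      ![J * (v 0 - r * v 4) / (J + r ^ 2 * m), J * (v 1 + r * v 3) / (J + r ^ 2 * m), v 2,
        r * m * (v 1 + r * v 3) / (J + r ^ 2 * m), -(r * m * (v 0 - r * v 4)) / (J + r ^ 2 * m),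
        0] := by
  have hJ' : 0 < J + r ^ 2 * m := by positivity
  rw [collisionProjection, noSlipConstraint_gram_inv hm hJ, inv_ballMetric hm.ne' hJ.ne']
  simp only [← mulVec_mulVec, noSlipConstraint_mulVec, noSlipConstraint_transpose_mulVec]
  ext i
  fin_cases i <;> simp [mulVec_diagonal] <;> field_simp

end

theorem ball_floor_collision_general (m r J : ℝ) (hm : 0 < m)
    (hJ : 0 < J) (v₁ v₂ v₃ ω₁ ω₂ ω₃ : ℝ) :
    let G : Matrix (Fin 6) (Fin 6) ℝ := Matrix.diagonal ![m, m, m, J, J, J]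
    let B : Matrix (Fin 3) (Fin 6) ℝ :=
      !![1, 0, 0, 0, -r, 0; 0, 1, 0, r, 0, 0; 0, 0, 1, 0, 0, 0]
    let P := G⁻¹ * Bᵀ * (B * G⁻¹ * Bᵀ)⁻¹ * B
    let J' := J + r ^ 2 * m
    let vminus : Fin 6 → ℝ := ![v₁, v₂, v₃, ω₁, ω₂, ω₃]
    let vplus := (1 - (2 : ℝ) • P) *ᵥ vminus
    vplus 0 = ((m * r ^ 2 - J) / J') * v₁ + (2 * J * r / J') * ω₂ ∧
    vplus 1 = ((m * r ^ 2 - J) / J') * v₂ - (2 * J * r / J') * ω₁ ∧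
    vplus 2 = -v₃ ∧
    vplus 3 = -(2 * r * m / J') * v₂ + ((J - m * r ^ 2) / J') * ω₁ ∧
    vplus 4 = (2 * r * m / J') * v₁ + ((J - m * r ^ 2) / J') * ω₂ ∧
    vplus 5 = ω₃ := by
  intro G B P J' vminus vplus
  have hJ' : 0 < J' := by positivity
  have hP : P *ᵥ vminus = _ := collisionProjection_mulVec hm hJ r vminus
  have hvplus : vplus = vminus - (2 : ℝ) • (P *ᵥ vminus) := by
    show (1 - (2 : ℝ) • P) *ᵥ vminus = _
    rw [sub_mulVec, one_mulVec, smul_mulVec]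
  rw [hvplus, hP]
  refine ⟨?_, ?_, ?_, ?_, ?_, ?_⟩ <;>
    simp only [Fin.isValue, cons_val_zero, cons_val, cons_val_one, smul_cons, smul_eq_mul,
      smul_empty, Pi.sub_apply, vminus] <;>
    field_simp <;> ring

/-- Ball–floor collision: with `G = diag(m,m,m,J,J,J)`, the no-slip constraint
matrix `B`, and `P = G⁻¹ Bᵀ (B G⁻¹ Bᵀ)⁻¹ B`, the reflection `v⁺ = (I - 2P) v⁻`
is given componentwise by the formulas of Theorem `cvb6`. -/
theorem ball_floor_collision (m r J : ℝ) (hm : 0 < m) (hr : 0 < r)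
    (hJ : 0 < J) (v₁ v₂ v₃ ω₁ ω₂ ω₃ : ℝ) :
    let G : Matrix (Fin 6) (Fin 6) ℝ := Matrix.diagonal ![m, m, m, J, J, J]
    let B : Matrix (Fin 3) (Fin 6) ℝ :=
      !![1, 0, 0, 0, -r, 0; 0, 1, 0, r, 0, 0; 0, 0, 1, 0, 0, 0]
    let P := G⁻¹ * Bᵀ * (B * G⁻¹ * Bᵀ)⁻¹ * B
    let J' := J + r ^ 2 * m
    let vminus : Fin 6 → ℝ := ![v₁, v₂, v₃, ω₁, ω₂, ω₃]
    let vplus := (1 - (2 : ℝ) • P) *ᵥ vminus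
    vplus 0 = ((m * r ^ 2 - J) / J') * v₁ + (2 * J * r / J') * ω₂ ∧
    vplus 1 = ((m * r ^ 2 - J) / J') * v₂ - (2 * J * r / J') * ω₁ ∧
    vplus 2 = -v₃ ∧
    vplus 3 = -(2 * r * m / J') * v₂ + ((J - m * r ^ 2) / J') * ω₁ ∧
    vplus 4 = (2 * r * m / J') * v₁ + ((J - m * r ^ 2) / J') * ω₂ ∧
    vplus 5 = ω₃ :=
  ball_floor_collision_general m r J hm hJ v₁ v₂ v₃ ω₁ ω₂ ω₃
end

section
/- The ball–floor collision conserves the angular momentum about the contact point: with CS = (0,0,r) (vector from contact point to center) and the collision formulas of the ball–floor collision, m·(CS × v⁺) + J·ω⁺ = m·(CS × v⁻) + J·ω⁻, where × is the cross product in ℝ³. -/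
open Matrix

theorem crossProduct_vertical_left {R : Type*} [CommRing R] (r a b c : R) :
    crossProduct ![0, 0, r] ![a, b, c] = ![-(r * b), r * a, 0] := by
  simp [cross_apply]

/-- The horizontal components of `m (CS × v) + J ω` are `m r v + J ω` for
`(v, ω) = (-v₂, ω₁)` and `(v₁, ω₂)`, and the collision acts on both pairs by the same matrix. -/
theorem collision_preserves_tangential_angularMomentum {K : Type*} [Field K] {m r J : K}
    (hJ' : J + r ^ 2 * m ≠ 0) (v ω : K) :
    m * r * ((m * r ^ 2 - J) / (J + r ^ 2 * m) * v + 2 * J * r / (J + r ^ 2 * m) * ω)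
      + J * (2 * r * m / (J + r ^ 2 * m) * v + (J - m * r ^ 2) / (J + r ^ 2 * m) * ω)
      = m * r * v + J * ω := by
  calc _ = (m * r * v + J * ω) * (J + r ^ 2 * m) / (J + r ^ 2 * m) := by ring
    _ = m * r * v + J * ω := mul_div_cancel_right₀ _ hJ'

theorem ball_floor_angular_momentum_general (m r J : ℝ) (hm : 0 < m)
    (hJ : 0 < J) (v₁ v₂ v₃ ω₁ ω₂ ω₃ v₁' v₂' v₃' ω₁' ω₂' ω₃' J' : ℝ)
    (hJ' : J' = J + r ^ 2 * m)
    (h1 : v₁' = ((m * r ^ 2 - J) / J') * v₁ + (2 * J * r / J') * ω₂)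
    (h2 : v₂' = ((m * r ^ 2 - J) / J') * v₂ - (2 * J * r / J') * ω₁)
    (h3 : v₃' = -v₃)
    (h4 : ω₁' = -(2 * r * m / J') * v₂ + ((J - m * r ^ 2) / J') * ω₁)
    (h5 : ω₂' = (2 * r * m / J') * v₁ + ((J - m * r ^ 2) / J') * ω₂)
    (h6 : ω₃' = ω₃) :
    let CS : Fin 3 → ℝ := ![0, 0, r]
    m • (crossProduct CS ![v₁', v₂', v₃']) + J • ![ω₁', ω₂', ω₃'] =
    m • (crossProduct CS ![v₁, v₂, v₃]) + J • ![ω₁, ω₂, ω₃] := by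
  have hJ'_ne : J + r ^ 2 * m ≠ 0 := by positivity
  subst hJ' h1 h2 h3 h4 h5 h6
  simp only [crossProduct_vertical_left, smul_cons, smul_empty, cons_add_cons, empty_add_empty,
    smul_eq_mul]
  refine congrArg₂ vecCons ?_ (congrArg₂ vecCons ?_ rfl)
  · linear_combination collision_preserves_tangential_angularMomentum hJ'_ne (-v₂) ω₁
  · linear_combination collision_preserves_tangential_angularMomentum hJ'_ne v₁ ω₂

/-- The ball–floor collision conserves the angular momentum about the contact
point: `m (CS × v⁺) + J ω⁺ = m (CS × v⁻) + J ω⁻` with `CS = (0, 0, r)`. -/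
theorem ball_floor_angular_momentum (m r J : ℝ) (hm : 0 < m) (hr : 0 < r)
    (hJ : 0 < J) (v₁ v₂ v₃ ω₁ ω₂ ω₃ v₁' v₂' v₃' ω₁' ω₂' ω₃' J' : ℝ)
    (hJ' : J' = J + r ^ 2 * m)
    (h1 : v₁' = ((m * r ^ 2 - J) / J') * v₁ + (2 * J * r / J') * ω₂)
    (h2 : v₂' = ((m * r ^ 2 - J) / J') * v₂ - (2 * J * r / J') * ω₁)
    (h3 : v₃' = -v₃)
    (h4 : ω₁' = -(2 * r * m / J') * v₂ + ((J - m * r ^ 2) / J') * ω₁)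
    (h5 : ω₂' = (2 * r * m / J') * v₁ + ((J - m * r ^ 2) / J') * ω₂)
    (h6 : ω₃' = ω₃) :
    let CS : Fin 3 → ℝ := ![0, 0, r]
    m • (crossProduct CS ![v₁', v₂', v₃']) + J • ![ω₁', ω₂', ω₃'] =
    m • (crossProduct CS ![v₁, v₂, v₃]) + J • ![ω₁, ω₂, ω₃] :=
  ball_floor_angular_momentum_general m r J hm hJ v₁ v₂ v₃ ω₁ ω₂ ω₃ v₁' v₂' v₃' ω₁' ω₂' ω₃' J' hJ'
    h1 h2 h3 h4 h5 h6
end
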